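/- arXiv:0808.1435 — 2 statements merged into one kernel-verified Lean document; each statement's English description precedes it below -/
import Mathlib

section
/- For i ≥ 1, the generating function N_i(t) = ∑_{n≥0} |N(i,n)| t^n for pairs of nonintersecting (vicious) walks starting at heights 0 and 2i equals (1 − D(t)^i)/(1 − 4t), where D(t) = C(t) − 1. -/
open PowerSeries Finset

/-- Generating function of the Catalan numbers `C_n = (1/(n+1))·binom(2n,n)`. -/
noncomputable def catGF : PowerSeries ℚ :=
  PowerSeries.mk fun n => (Nat.choose (2 * n) n : ℚ) / (n + 1)

/-- `D(t) = C(t) - 1`. -/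
noncomputable def DGF : PowerSeries ℚ := catGF - 1

/-- A lattice walk of length `n` with steps `±1`. -/
def IsWalk (n : ℕ) (L : Fin (n + 1) → ℤ) : Prop :=
  ∀ k : Fin n, |L k.succ - L k.castSucc| = 1

/-- Two walks intersect (share a common point at the same time). -/
def Meets {m : ℕ} (L L' : Fin m → ℤ) : Prop := ∃ k, L k = L' k

/-- All triples of walks of length `n` starting at heights `0, 2i, 2i+2j`. -/
def USet (i j n : ℕ) :
    Set ((Fin (n + 1) → ℤ) × (Fin (n + 1) → ℤ) × (Fin (n + 1) → ℤ)) :=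
  {T | IsWalk n T.1 ∧ IsWalk n T.2.1 ∧ IsWalk n T.2.2 ∧
    T.1 0 = 0 ∧ T.2.1 0 = 2 * i ∧ T.2.2 0 = 2 * i + 2 * j}

/-- Triples where `L₁` and `L₂` are nonintersecting. -/
def W12Set (i j n : ℕ) := {T ∈ USet i j n | ¬ Meets T.1 T.2.1}

/-- Triples where `L₂` and `L₃` are nonintersecting. -/
def W23Set (i j n : ℕ) := {T ∈ USet i j n | ¬ Meets T.2.1 T.2.2}

/-- Triples where `L₁` intersects `L₃`. -/
def M13Set (i j n : ℕ) := {T ∈ USet i j n | Meets T.1 T.2.2}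

/-- Triples where `L₂` intersects both `L₁` and `L₃`. -/
def M1223Set (i j n : ℕ) :=
  {T ∈ USet i j n | Meets T.2.1 T.1 ∧ Meets T.2.1 T.2.2}

/-- Vicious (pairwise nonintersecting) triples. -/
def VSet (i j n : ℕ) :=
  {T ∈ USet i j n | ¬ Meets T.1 T.2.1 ∧ ¬ Meets T.2.1 T.2.2 ∧ ¬ Meets T.1 T.2.2}

/-- Pairs of walks of length `n` starting at heights `0` and `2i`. -/
def PairSet (i n : ℕ) : Set ((Fin (n + 1) → ℤ) × (Fin (n + 1) → ℤ)) :=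
  {P | IsWalk n P.1 ∧ IsWalk n P.2 ∧ P.1 0 = 0 ∧ P.2 0 = 2 * i}

/-- Intersecting pairs. -/
def MSet (i n : ℕ) := {P ∈ PairSet i n | Meets P.1 P.2}

/-- Nonintersecting (vicious) pairs. -/
def NSet (i n : ℕ) := {P ∈ PairSet i n | ¬ Meets P.1 P.2}

/-- Converging pairs: never meet before time `n`, meet at time `n`. -/
def TSet (i n : ℕ) :=
  {P ∈ PairSet i n | (∀ k : Fin (n + 1), (k : ℕ) < n → P.1 k ≠ P.2 k) ∧
    P.1 (Fin.last n) = P.2 (Fin.last n)}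

/-- 2-watermelons of length `n`. -/
def MelonSet (n : ℕ) : Set ((Fin (n + 1) → ℤ) × (Fin (n + 1) → ℤ)) :=
  {P | IsWalk n P.1 ∧ IsWalk n P.2 ∧ P.1 0 = 0 ∧ P.2 0 = 2 ∧
    P.2 (Fin.last n) = P.1 (Fin.last n) + 2 ∧ ∀ k, P.1 k < P.2 k}

/-- Partial Dyck paths of length `2n` from height `2i` to `0`, strictly positive before the end. -/
def PDyckSet (i n : ℕ) : Set (Fin (2 * n + 1) → ℤ) :=
  {Q | IsWalk (2 * n) Q ∧ Q 0 = 2 * i ∧ Q (Fin.last (2 * n)) = 0 ∧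
    ∀ k : Fin (2 * n + 1), (k : ℕ) < 2 * n → 0 < Q k}

/-!
Encode a pair of walks by its sequence of step pairs `(u, v) ∈ ℤˣ × ℤˣ`. The gap `L₂ - L₁` is then
a walk from `2i` with steps `v - u ∈ {-2, 0, 0, 2}`, and the pair is vicious iff the gap avoids `0`.
Each of the `4` one-step extensions of a vicious pair is either vicious or meets for the first time
at the last step, so `N_i(t) (1 - 4t) = 1 - T_i(t)`, where `T_i` counts first passages of the gap
from `2i` to `0`. Splitting off the first step gives `T_0 = 1` and
`T_i = t (T_{i-1} + 2 T_i + T_{i+1})` for `i ≥ 1`; since `D = t (1 + D)²`, the powers `D^i` satisfy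
the same recurrence, which determines the family coefficient by coefficient. Hence `T_i = D^i`.
-/

namespace FirstPassage

variable {σ : Type*} [Fintype σ] (d : σ → ℤ)

def avoidsZero (m : ℤ) (n : ℕ) : Finset (Fin n → σ) :=
  {s | ∀ k, m + Fin.partialSum (d ∘ s) k ≠ 0}

def firstPassage (m : ℤ) (n : ℕ) : Finset (Fin n → σ) :=
  {s | (∀ k : Fin n, m + Fin.partialSum (d ∘ s) k.castSucc ≠ 0) ∧
    m + Fin.partialSum (d ∘ s) (Fin.last n) = 0}

variable {d}

lemma mem_avoidsZero_succ {m : ℤ} {n : ℕ} {s : Fin (n + 1) → σ} :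
    s ∈ avoidsZero d m (n + 1) ↔
      Fin.init s ∈ avoidsZero d m n ∧ m + Fin.partialSum (d ∘ s) (Fin.last (n + 1)) ≠ 0 := by
  simp [avoidsZero, Fin.forall_fin_succ' (n := n + 1), Fin.comp_init, Fin.partialSum_init]

lemma mem_firstPassage_succ {m : ℤ} {n : ℕ} {s : Fin (n + 1) → σ} :
    s ∈ firstPassage d m (n + 1) ↔
      Fin.init s ∈ avoidsZero d m n ∧ m + Fin.partialSum (d ∘ s) (Fin.last (n + 1)) = 0 := by
  simp [firstPassage, avoidsZero, Fin.comp_init, Fin.partialSum_init]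

lemma cons_mem_firstPassage_succ {m : ℤ} (hm : m ≠ 0) {n : ℕ} (c : σ) (t : Fin n → σ) :
    Fin.cons c t ∈ firstPassage d m (n + 1) ↔ t ∈ firstPassage d (m + d c) n := by
  simp [firstPassage, Fin.forall_fin_succ (n := n), Fin.comp_cons, ← Fin.succ_last,
    Fin.partialSum_succ', add_assoc, hm]

variable (d)

lemma card_avoidsZero_succ_add_card_firstPassage_succ (m : ℤ) (n : ℕ) :
    #(avoidsZero d m (n + 1)) + #(firstPassage d m (n + 1)) =
      Fintype.card σ * #(avoidsZero d m n) := by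
  classical
  have hsplit : #(avoidsZero d m (n + 1)) + #(firstPassage d m (n + 1)) =
      #({s : Fin (n + 1) → σ | Fin.init s ∈ avoidsZero d m n} : Finset _) := by
    rw [← card_filter_add_card_filter_not
      (s := {s : Fin (n + 1) → σ | Fin.init s ∈ avoidsZero d m n})
      (fun s => m + Fin.partialSum (d ∘ s) (Fin.last (n + 1)) ≠ 0), filter_filter, filter_filter]
    congr 2 <;> ext s <;> simp [mem_avoidsZero_succ, mem_firstPassage_succ]
  have hinit : #({s : Fin (n + 1) → σ | Fin.init s ∈ avoidsZero d m n} : Finset _) =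
      #(univ ×ˢ avoidsZero d m n) :=
    card_nbij' (fun s => (s (Fin.last n), Fin.init s)) (fun p => Fin.snoc p.2 p.1)
      (fun s hs => by simpa using hs) (fun p hp => by simpa using hp)
      (fun s _ => by simp) (fun p _ => by simp)
  rw [hsplit, hinit, card_product, card_univ]

lemma card_firstPassage_succ {m : ℤ} (hm : m ≠ 0) (n : ℕ) :
    #(firstPassage d m (n + 1)) = ∑ c, #(firstPassage d (m + d c) n) := by
  rw [← card_sigma]
  refine card_nbij' (fun s => ⟨s 0, Fin.tail s⟩) (fun p => Fin.cons p.1 p.2) ?_ ?_ ?_ ?_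
  · intro s hs
    rw [← Fin.cons_self_tail s, mem_coe, cons_mem_firstPassage_succ hm] at hs
    simpa using hs
  · rintro ⟨c, t⟩ ht
    simpa [cons_mem_firstPassage_succ hm] using ht
  · intro s _
    simp
  · intro p _
    simp

lemma card_firstPassage_zero (m : ℤ) :
    #(firstPassage d m 0) = if m = 0 then 1 else 0 := by
  split_ifs with hm <;> simp [firstPassage, hm, filter_true_of_mem, filter_false_of_mem]

lemma card_avoidsZero_zero (m : ℤ) :
    #(avoidsZero d m 0) = if m = 0 then 0 else 1 := by
  split_ifs with hm <;> simp [avoidsZero, hm, filter_true_of_mem, filter_false_of_mem]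

lemma firstPassage_zero_succ (n : ℕ) : firstPassage d 0 (n + 1) = ∅ := by
  ext s
  simp [firstPassage, Fin.forall_fin_succ]

noncomputable def avoidsZeroSeries (m : ℤ) : ℚ⟦X⟧ :=
  mk fun n => (#(avoidsZero d m n) : ℚ)

noncomputable def firstPassageSeries (m : ℤ) : ℚ⟦X⟧ :=
  mk fun n => (#(firstPassage d m n) : ℚ)

lemma avoidsZeroSeries_mul (m : ℤ) :
    avoidsZeroSeries d m * (1 - (Fintype.card σ : ℚ⟦X⟧) * X) = 1 - firstPassageSeries d m := by
  ext (_ | n)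
  · by_cases hm : m = 0 <;>
      simp [avoidsZeroSeries, firstPassageSeries, card_avoidsZero_zero, card_firstPassage_zero, hm]
  · have h : (#(avoidsZero d m (n + 1)) + #(firstPassage d m (n + 1)) : ℚ) =
        Fintype.card σ * #(avoidsZero d m n) := by
      exact_mod_cast card_avoidsZero_succ_add_card_firstPassage_succ d m n
    rw [mul_sub, mul_one, ← mul_assoc, map_sub, coeff_succ_mul_X, mul_comm, ← map_natCast C,
      coeff_C_mul]
    simp only [avoidsZeroSeries, firstPassageSeries, coeff_mk, map_sub, coeff_one,
      Nat.succ_ne_zero, if_false, zero_sub]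
    linear_combination h

lemma firstPassageSeries_zero : firstPassageSeries d 0 = 1 := by
  ext (_ | n) <;>
    simp [firstPassageSeries, card_firstPassage_zero, firstPassage_zero_succ, coeff_one]

lemma firstPassageSeries_of_ne_zero {m : ℤ} (hm : m ≠ 0) :
    firstPassageSeries d m = X * ∑ c, firstPassageSeries d (m + d c) := by
  ext (_ | n)
  · simp [firstPassageSeries, card_firstPassage_zero, hm]
  · simp [firstPassageSeries, coeff_succ_X_mul, map_sum, card_firstPassage_succ d hm]

end FirstPassage

lemma catGF_eq_map_catalanSeries : catGF = map (Nat.castRingHom ℚ) catalanSeries := by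
  ext n
  rw [catGF, coeff_mk, coeff_map, catalanSeries_coeff, catalan_eq_centralBinom_div,
    eq_natCast, Nat.cast_div (Nat.succ_dvd_centralBinom n) (by positivity)]
  simp [Nat.centralBinom]

lemma DGF_eq_X_mul : DGF = X * (1 + DGF) ^ 2 := by
  have h := congrArg (map (Nat.castRingHom ℚ)) catalanSeries_sq_mul_X_add_one
  simp only [map_add, map_mul, map_pow, map_X, map_one, ← catGF_eq_map_catalanSeries] at h
  rw [DGF]
  linear_combination (-1 : ℚ⟦X⟧) * h

lemma DGF_pow_succ (j : ℕ) :
    DGF ^ (j + 1) = X * (DGF ^ j + 2 * DGF ^ (j + 1) + DGF ^ (j + 2)) := by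
  linear_combination DGF ^ j * DGF_eq_X_mul

lemma PowerSeries.eq_of_eq_X_mul_recurrence {R : Type*} [CommRing R] {F G : ℕ → R⟦X⟧}
    (hF₀ : F 0 = 1) (hG₀ : G 0 = 1)
    (hF : ∀ j, F (j + 1) = X * (F j + 2 * F (j + 1) + F (j + 2)))
    (hG : ∀ j, G (j + 1) = X * (G j + 2 * G (j + 1) + G (j + 2))) : F = G := by
  funext i
  ext n
  induction n generalizing i with
  | zero =>
    cases i with
    | zero => rw [hF₀, hG₀]
    | succ j => rw [hF, hG]; simp
  | succ n ih =>
    cases i with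
    | zero => rw [hF₀, hG₀]
    | succ j =>
      rw [hF j, hG j, coeff_succ_X_mul, coeff_succ_X_mul]
      simp only [map_add, two_mul, ih]

open FirstPassage

lemma Fin.partialSum_sub {G : Type*} [AddCommGroup G] {n : ℕ} (f g : Fin n → G)
    (k : Fin (n + 1)) :
    Fin.partialSum (f - g) k = Fin.partialSum f k - Fin.partialSum g k := by
  induction k using Fin.inductionOn with
  | zero => simp
  | succ k ih => simp only [Fin.partialSum_succ, ih, Pi.sub_apply]; abel

section Walks

variable {n : ℕ}

def walkOfSteps (a : ℤ) (s : Fin n → ℤˣ) : Fin (n + 1) → ℤ :=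
  fun k => a + Fin.partialSum (fun j => (s j : ℤ)) k

@[simp]
lemma walkOfSteps_zero (a : ℤ) (s : Fin n → ℤˣ) : walkOfSteps a s 0 = a := by
  simp [walkOfSteps]

lemma walkOfSteps_succ_sub (a : ℤ) (s : Fin n → ℤˣ) (j : Fin n) :
    walkOfSteps a s j.succ - walkOfSteps a s j.castSucc = s j := by
  simp [walkOfSteps, Fin.partialSum_succ]

lemma isWalk_walkOfSteps (a : ℤ) (s : Fin n → ℤˣ) : IsWalk n (walkOfSteps a s) := fun j => by
  rw [walkOfSteps_succ_sub, ← Int.isUnit_iff_abs_eq]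
  exact (s j).isUnit

lemma walkOfSteps_injective (a : ℤ) : Function.Injective (walkOfSteps (n := n) a) :=
  fun s t h => funext fun j => Units.ext <| by
    rw [← walkOfSteps_succ_sub a s, ← walkOfSteps_succ_sub a t, h]

lemma IsWalk.exists_walkOfSteps {L : Fin (n + 1) → ℤ} (hL : IsWalk n L) :
    ∃ s, walkOfSteps (L 0) s = L := by
  refine ⟨fun j => (Int.isUnit_iff_abs_eq.mpr (hL j)).unit, funext fun k => ?_⟩
  simpa [walkOfSteps, neg_add_eq_sub] using congrFun (Fin.partialSum_left_neg L) k

def gapStep (c : ℤˣ × ℤˣ) : ℤ := c.2 - c.1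

def walkPairOfSteps (a b : ℤ) (s : Fin n → ℤˣ × ℤˣ) :
    (Fin (n + 1) → ℤ) × (Fin (n + 1) → ℤ) :=
  (walkOfSteps a (Prod.fst ∘ s), walkOfSteps b (Prod.snd ∘ s))

lemma walkPairOfSteps_injective (a b : ℤ) : Function.Injective (walkPairOfSteps (n := n) a b) :=
  fun s t h => by
    have h₁ := walkOfSteps_injective a (congrArg Prod.fst h)
    have h₂ := walkOfSteps_injective b (congrArg Prod.snd h)
    exact funext fun j => Prod.ext (congrFun h₁ j) (congrFun h₂ j)

lemma walkPairOfSteps_sub (a b : ℤ) (s : Fin n → ℤˣ × ℤˣ) (k : Fin (n + 1)) :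
    (walkPairOfSteps a b s).2 k - (walkPairOfSteps a b s).1 k =
      b - a + Fin.partialSum (gapStep ∘ s) k := by
  have : gapStep ∘ s = (fun j => ((s j).2 : ℤ)) - fun j => ((s j).1 : ℤ) := rfl
  simp only [walkPairOfSteps, walkOfSteps, this, Fin.partialSum_sub, Function.comp_apply]
  ring

lemma meets_walkPairOfSteps_iff (a b : ℤ) (s : Fin n → ℤˣ × ℤˣ) :
    Meets (walkPairOfSteps a b s).1 (walkPairOfSteps a b s).2 ↔
      ∃ k, b - a + Fin.partialSum (gapStep ∘ s) k = 0 := by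
  simp only [Meets, ← walkPairOfSteps_sub, sub_eq_zero]
  exact exists_congr fun _ => eq_comm

lemma NSet_eq_image (i n : ℕ) :
    NSet i n = walkPairOfSteps 0 (2 * i) '' avoidsZero gapStep (2 * i) n := by
  ext P
  constructor
  · rintro ⟨⟨hw₁, hw₂, h₁, h₂⟩, hP⟩
    obtain ⟨s₁, hs₁⟩ := hw₁.exists_walkOfSteps
    obtain ⟨s₂, hs₂⟩ := hw₂.exists_walkOfSteps
    rw [h₁] at hs₁
    rw [h₂] at hs₂
    have hP' : walkPairOfSteps 0 (2 * i) (fun j => (s₁ j, s₂ j)) = P := Prod.ext hs₁ hs₂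
    refine ⟨_, ?_, hP'⟩
    rw [← hP', meets_walkPairOfSteps_iff] at hP
    simpa [avoidsZero] using hP
  · rintro ⟨s, hs, rfl⟩
    refine ⟨⟨isWalk_walkOfSteps _ _, isWalk_walkOfSteps _ _, walkOfSteps_zero _ _,
      walkOfSteps_zero _ _⟩, ?_⟩
    rw [meets_walkPairOfSteps_iff]
    simpa [avoidsZero] using hs

end Walks

lemma firstPassageSeries_gapStep_succ (j : ℕ) :
    firstPassageSeries gapStep (2 * (j + 1 : ℕ)) =
      X * (firstPassageSeries gapStep (2 * j) + 2 * firstPassageSeries gapStep (2 * (j + 1 : ℕ)) +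
        firstPassageSeries gapStep (2 * (j + 2 : ℕ))) := by
  have hsum : ∑ c, firstPassageSeries gapStep (2 * (j + 1 : ℕ) + gapStep c) =
      firstPassageSeries gapStep (2 * j) + 2 * firstPassageSeries gapStep (2 * (j + 1 : ℕ)) +
        firstPassageSeries gapStep (2 * (j + 2 : ℕ)) := by
    simp [Fintype.sum_prod_type, UnitsInt.univ, gapStep]
    ring_nf
  conv_lhs => rw [firstPassageSeries_of_ne_zero _ (by positivity), hsum]

lemma firstPassageSeries_gapStep (i : ℕ) : firstPassageSeries gapStep (2 * i) = DGF ^ i :=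
  congrFun (PowerSeries.eq_of_eq_X_mul_recurrence (F := fun i => firstPassageSeries gapStep (2 * i))
    (by simpa using firstPassageSeries_zero gapStep) (pow_zero DGF) firstPassageSeries_gapStep_succ
    DGF_pow_succ) i

lemma card_NSet (i n : ℕ) : Nat.card (NSet i n) = #(avoidsZero gapStep (2 * i) n) := by
  rw [NSet_eq_image, Nat.card_image_of_injective (walkPairOfSteps_injective _ _),
    Nat.card_coe_set_eq, Set.ncard_coe_finset]

theorem stmt13_general (i : ℕ) :
    PowerSeries.mk (fun n => (Nat.card (NSet i n) : ℚ)) =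
      (1 - DGF ^ i) * (1 - 4 * PowerSeries.X)⁻¹ := by
  have hN : PowerSeries.mk (fun n => (Nat.card (NSet i n) : ℚ)) =
      avoidsZeroSeries gapStep (2 * i) := by
    simp only [card_NSet, avoidsZeroSeries]
  have hcard : (Fintype.card (ℤˣ × ℤˣ) : ℚ⟦X⟧) = 4 := by
    simp [Fintype.card_units_int]
  rw [hN, ← firstPassageSeries_gapStep, ← avoidsZeroSeries_mul, hcard, mul_assoc,
    PowerSeries.mul_inv_cancel _ (by simp), mul_one]

theorem stmt13 (i : ℕ) (hi : 1 ≤ i) :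
    PowerSeries.mk (fun n => (Nat.card (NSet i n) : ℚ)) =
      (1 - DGF ^ i) * (1 - 4 * PowerSeries.X)⁻¹ :=
  stmt13_general i
end

section
/- For i, j ≥ 1, V_{i,j}(t) = C(2t)²·(1 + D(2t) + ⋯ + D(2t)^{i−1})·(1 + D(2t) + ⋯ + D(2t)^{j−1}), where C is the Catalan generating function and D = C − 1. -/
open PowerSeries Finset

/-!
Deleting the first step of a vicious triple and translating by the step of the lowest walk gives
a vicious triple of length `n` whose half-gaps `i`, `j` have each moved by at most one. Summing
over the eight step patterns gives a recurrence for `|V(i,j,n+1)|`, with `V(0,j,n) = V(i,0,n) = ∅`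
and `|V(i,j,0)| = 1`. Writing `D = D(2t)`, one has `C(2t) = 1 + D`, `D = 2t(1 + D)²` and
`(1 - D)(1 + D + ⋯ + D^(i-1)) = 1 - D^i`, from which the claimed series satisfy the same recurrence.
-/

section Walks

variable {n : ℕ}

def consShift (x c : ℤ) (M : Fin (n + 1) → ℤ) : Fin (n + 2) → ℤ :=
  Fin.cons x fun k => M k + c

@[simp]
lemma consShift_zero (x c : ℤ) (M : Fin (n + 1) → ℤ) : consShift x c M 0 = x := rfl

@[simp]
lemma consShift_succ (x c : ℤ) (M : Fin (n + 1) → ℤ) (k : Fin (n + 1)) :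
    consShift x c M k.succ = M k + c := rfl

lemma consShift_injective (x c : ℤ) : Function.Injective (consShift (n := n) x c) := by
  intro M M' h
  funext k
  simpa using congrFun h k.succ

lemma consShift_head_tail (L : Fin (n + 2) → ℤ) (c : ℤ) :
    consShift (L 0) c (fun k => L k.succ - c) = L := by
  funext k
  cases k using Fin.cases <;> simp

lemma isWalk_consShift_iff {x c : ℤ} {M : Fin (n + 1) → ℤ} :
    IsWalk (n + 1) (consShift x c M) ↔ |M 0 + c - x| = 1 ∧ IsWalk n M := by
  simp [IsWalk, Fin.forall_fin_succ, consShift]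

lemma meets_consShift_iff {x x' c : ℤ} {M M' : Fin (n + 1) → ℤ} :
    Meets (consShift x c M) (consShift x' c M') ↔ x = x' ∨ Meets M M' := by
  simp [Meets, Fin.exists_fin_succ, consShift]

end Walks

def unitStep (up : Bool) : ℤ := if up then 1 else -1

lemma abs_unitStep (up : Bool) : |unitStep up| = 1 := by
  cases up <;> simp [unitStep]

lemma unitStep_injective : Function.Injective unitStep := by
  decide

lemma exists_unitStep_eq {x : ℤ} (hx : |x| = 1) : ∃ up, unitStep up = x := by
  rcases abs_eq (zero_le_one' ℤ) |>.mp hx with rfl | rfl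
  exacts [⟨true, rfl⟩, ⟨false, rfl⟩]

/-- `i` is half the gap between two adjacent walks, `u` and `v` are the directions (`true` = up)
of the next steps of the lower and the upper walk. -/
def gapAfter (i : ℕ) (u v : Bool) : ℕ :=
  if u = v then i else if u then i - 1 else i + 1

lemma two_mul_gapAfter {i : ℕ} (hi : 1 ≤ i) (u v : Bool) :
    2 * (gapAfter i u v : ℤ) = 2 * i + unitStep v - unitStep u := by
  cases u <;> cases v <;> simp [gapAfter, unitStep] <;> omega

abbrev WalkTriple (m : ℕ) := (Fin m → ℤ) × (Fin m → ℤ) × (Fin m → ℤ)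

/-- Inverse to deleting the first step: the walks start at `0`, `2i`, `2i + 2j` and continue
along `T` translated by `c`. -/
def consTriple {n : ℕ} (i j : ℕ) (c : ℤ) : WalkTriple (n + 1) → WalkTriple (n + 2) :=
  Prod.map (consShift 0 c) (Prod.map (consShift (2 * i) c) (consShift (2 * i + 2 * j) c))

lemma consTriple_injective {n : ℕ} (i j : ℕ) (c : ℤ) :
    Function.Injective (consTriple (n := n) i j c) :=
  (consShift_injective _ _).prodMap ((consShift_injective _ _).prodMap (consShift_injective _ _))

lemma consTriple_mem_vSet_iff {i j n : ℕ} (hi : 1 ≤ i) (hj : 1 ≤ j) (c : ℤ)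
    (T : WalkTriple (n + 1)) :
    consTriple i j c T ∈ VSet i j (n + 1) ↔
      (|T.1 0 + c| = 1 ∧ |T.2.1 0 + c - 2 * i| = 1 ∧ |T.2.2 0 + c - (2 * i + 2 * j)| = 1) ∧
      (IsWalk n T.1 ∧ IsWalk n T.2.1 ∧ IsWalk n T.2.2) ∧
      (¬ Meets T.1 T.2.1 ∧ ¬ Meets T.2.1 T.2.2 ∧ ¬ Meets T.1 T.2.2) := by
  simp only [VSet, USet, consTriple, Set.mem_ofPred_eq, Prod.map_fst,
    Prod.map_snd, isWalk_consShift_iff, meets_consShift_iff, consShift_zero]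
  have : (0 : ℤ) ≠ 2 * i ∧ (2 * i : ℤ) ≠ 2 * i + 2 * j ∧ (0 : ℤ) ≠ 2 * i + 2 * j := by omega
  simp only [sub_zero, this, false_or, and_true]
  tauto

theorem vSet_succ_eq_iUnion {i j n : ℕ} (hi : 1 ≤ i) (hj : 1 ≤ j) :
    VSet i j (n + 1) = ⋃ d : Bool × Bool × Bool,
      consTriple i j (unitStep d.1) '' VSet (gapAfter i d.1 d.2.1) (gapAfter j d.2.1 d.2.2) n := by
  ext T
  simp only [Set.mem_iUnion, Set.mem_image]
  have g1 := two_mul_gapAfter hi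
  have g2 := two_mul_gapAfter hj
  constructor
  · intro hT
    let T' : WalkTriple (n + 1) := (fun k => T.1 k.succ - T.1 1, fun k => T.2.1 k.succ - T.1 1,
      fun k => T.2.2 k.succ - T.1 1)
    have hT'T : consTriple i j (T.1 1) T' = T := by
      obtain ⟨⟨-, -, -, h1, h2, h3⟩, -⟩ := hT
      rw [consTriple, ← h3, ← h2, ← h1]
      simp only [Prod.map, T', consShift_head_tail]
    rw [← hT'T, consTriple_mem_vSet_iff hi hj] at hT
    obtain ⟨⟨h1, h2, h3⟩, ⟨w1, w2, w3⟩, m⟩ := hT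
    simp only [T', Fin.succ_zero_eq_one, sub_add_cancel] at h1 h2 h3
    obtain ⟨u, hu⟩ := exists_unitStep_eq h1
    obtain ⟨v, hv⟩ := exists_unitStep_eq h2
    obtain ⟨w, hw⟩ := exists_unitStep_eq h3
    refine ⟨(u, v, w), T', ⟨⟨w1, w2, w3, ?_, ?_, ?_⟩, m⟩, by rwa [hu]⟩ <;>
      simp only [T', Fin.succ_zero_eq_one] <;> grind
  · rintro ⟨⟨u, v, w⟩, T', ⟨⟨w1, w2, w3, h1, h2, h3⟩, m⟩, rfl⟩
    rw [consTriple_mem_vSet_iff hi hj]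
    refine ⟨⟨?_, ?_, ?_⟩, ⟨w1, w2, w3⟩, m⟩ <;> dsimp only at h2 h3 ⊢
    · simpa [h1] using abs_unitStep u
    · convert abs_unitStep v using 2
      linarith [g1 u v]
    · convert abs_unitStep w using 2
      linarith [g1 u v, g2 v w]

lemma pairwise_disjoint_consTriple_image {i j n : ℕ} (hi : 1 ≤ i) (hj : 1 ≤ j) :
    Pairwise (Function.onFun Disjoint fun d : Bool × Bool × Bool =>
      consTriple i j (unitStep d.1) '' VSet (gapAfter i d.1 d.2.1) (gapAfter j d.2.1 d.2.2) n) := by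
  rintro ⟨u, v, w⟩ ⟨u', v', w'⟩ hne
  refine Set.disjoint_left.2 ?_
  rintro _ ⟨T, ⟨⟨-, -, -, h1, h2, h3⟩, -⟩, rfl⟩ ⟨T', ⟨⟨-, -, -, h1', h2', h3'⟩, -⟩, he⟩
  have e1 := congrFun (congrArg Prod.fst he) (Fin.succ 0)
  have e2 := congrFun (congrArg (·.2.1) he) (Fin.succ 0)
  have e3 := congrFun (congrArg (·.2.2) he) (Fin.succ 0)
  simp only [consTriple, Prod.map, consShift_succ] at e1 e2 e3 h1 h2 h3 h1' h2' h3'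
  have g1 := two_mul_gapAfter hi
  have g2 := two_mul_gapAfter hj
  apply hne
  simp only [Prod.mk.injEq, ← unitStep_injective.eq_iff]
  grind

lemma vSet_zero_subsingleton (i j : ℕ) : (VSet i j 0).Subsingleton := by
  rintro T ⟨⟨-, -, -, h1, h2, h3⟩, -⟩ T' ⟨⟨-, -, -, h1', h2', h3'⟩, -⟩
  ext k <;> rw [Fin.fin_one_eq_zero k] <;> simp only [*]

lemma vSet_zero_left (j n : ℕ) : VSet 0 j n = ∅ :=
  Set.eq_empty_iff_forall_notMem.2 fun _ ⟨⟨_, _, _, h1, h2, _⟩, m12, _⟩ =>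
    m12 ⟨0, by rw [h1, h2]; simp⟩

lemma vSet_zero_right (i n : ℕ) : VSet i 0 n = ∅ :=
  Set.eq_empty_iff_forall_notMem.2 fun _ ⟨⟨_, _, _, _, h2, h3⟩, _, m23, _⟩ =>
    m23 ⟨0, by rw [h2, h3]; simp⟩

theorem vSet_finite (n i j : ℕ) : (VSet i j n).Finite := by
  induction n generalizing i j with
  | zero => exact (vSet_zero_subsingleton i j).finite
  | succ n ih =>
    rcases Nat.eq_zero_or_pos i with rfl | hi
    · simp [vSet_zero_left]
    rcases Nat.eq_zero_or_pos j with rfl | hj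
    · simp [vSet_zero_right]
    rw [vSet_succ_eq_iUnion hi hj]
    exact Set.finite_iUnion fun _ => (ih _ _).image _

theorem ncard_vSet_zero {i j : ℕ} (hi : 1 ≤ i) (hj : 1 ≤ j) : (VSet i j 0).ncard = 1 := by
  have hmem : ((fun _ => 0, fun _ => 2 * i, fun _ => 2 * i + 2 * j) : WalkTriple 1) ∈ VSet i j 0 :=
    ⟨⟨(·.elim0), (·.elim0), (·.elim0), rfl, rfl, rfl⟩,
      fun ⟨_, h⟩ => by dsimp only at h; omega, fun ⟨_, h⟩ => by dsimp only at h; omega,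
      fun ⟨_, h⟩ => by dsimp only at h; omega⟩
  rw [(vSet_zero_subsingleton i j).eq_singleton_of_mem hmem, Set.ncard_singleton]

theorem ncard_vSet_succ {i j n : ℕ} (hi : 1 ≤ i) (hj : 1 ≤ j) :
    (VSet i j (n + 1)).ncard = ∑ d : Bool × Bool × Bool,
      (VSet (gapAfter i d.1 d.2.1) (gapAfter j d.2.1 d.2.2) n).ncard := by
  rw [vSet_succ_eq_iUnion hi hj, Set.ncard_iUnion_of_finite (fun _ => (vSet_finite _ _ _).image _)
    (pairwise_disjoint_consTriple_image hi hj), finsum_eq_sum_of_fintype]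
  simp only [Set.ncard_image_of_injective _ (consTriple_injective _ _ _)]

lemma coeff_catGF (n : ℕ) : coeff n catGF = catalan n := by
  rw [catGF, coeff_mk, catalan_eq_centralBinom_div, Nat.cast_div (Nat.succ_dvd_centralBinom n)
    (by exact_mod_cast Nat.succ_ne_zero n), Nat.centralBinom]
  push_cast
  ring

lemma catGF_eq_one_add_X_mul_sq : catGF = 1 + X * catGF ^ 2 := by
  ext n
  cases n with
  | zero => simp [coeff_catGF]
  | succ n =>
    rw [coeff_catGF, map_add, coeff_succ_X_mul, pow_two, coeff_mul, catalan_succ', coeff_one,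
      if_neg n.succ_ne_zero, zero_add]
    push_cast
    simp only [coeff_catGF]

lemma rescale_catGF_eq_one_add (a : ℚ) : rescale a catGF = 1 + rescale a DGF := by
  rw [DGF, map_sub, map_one, add_sub_cancel]

lemma rescale_two_DGF_eq : rescale (2 : ℚ) DGF = 2 * X * (1 + rescale (2 : ℚ) DGF) ^ 2 := by
  rw [← rescale_catGF_eq_one_add, DGF, map_sub, map_one]
  nth_rewrite 1 [catGF_eq_one_add_X_mul_sq]
  rw [map_add, map_mul, map_one, rescale_X, map_pow, map_ofNat]
  ring

lemma constantCoeff_rescale_DGF (a : ℚ) : constantCoeff (rescale a DGF) = 0 := by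
  simp [DGF, ← coeff_zero_eq_constantCoeff, coeff_catGF]

noncomputable def geomSumD (i : ℕ) : PowerSeries ℚ := ∑ k ∈ range i, rescale (2 : ℚ) DGF ^ k

noncomputable def viciousGF (i j : ℕ) : PowerSeries ℚ :=
  rescale (2 : ℚ) catGF ^ 2 * geomSumD i * geomSumD j

lemma geomSumD_succ (i : ℕ) : geomSumD (i + 1) = geomSumD i + rescale (2 : ℚ) DGF ^ i :=
  Finset.sum_range_succ _ _

lemma one_sub_mul_geomSumD (i : ℕ) :
    (1 - rescale (2 : ℚ) DGF) * geomSumD i = 1 - rescale (2 : ℚ) DGF ^ i :=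
  mul_neg_geom_sum _ _

lemma viciousGF_zero_left (j : ℕ) : viciousGF 0 j = 0 := by simp [viciousGF, geomSumD]

lemma viciousGF_zero_right (i : ℕ) : viciousGF i 0 = 0 := by simp [viciousGF, geomSumD]

lemma constantCoeff_viciousGF {i j : ℕ} (hi : 1 ≤ i) (hj : 1 ≤ j) :
    constantCoeff (viciousGF i j) = 1 := by
  have hS : ∀ m, 1 ≤ m → constantCoeff (geomSumD m) = 1 := fun m hm => by
    rw [geomSumD, map_sum, Finset.sum_eq_single_of_mem 0 (Finset.mem_range.2 hm) fun k _ hk => by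
      rw [map_pow, constantCoeff_rescale_DGF, zero_pow hk]]
    simp
  rw [viciousGF, map_mul, map_mul, map_pow, hS i hi, hS j hj, rescale_catGF_eq_one_add, map_add,
    constantCoeff_rescale_DGF]
  norm_num

theorem viciousGF_eq {i j : ℕ} (hi : 1 ≤ i) (hj : 1 ≤ j) :
    viciousGF i j = 1 + X * ∑ d : Bool × Bool × Bool,
      viciousGF (gapAfter i d.1 d.2.1) (gapAfter j d.2.1 d.2.2) := by
  obtain ⟨a, rfl⟩ : ∃ a, i = a + 1 := ⟨i - 1, by omega⟩
  obtain ⟨b, rfl⟩ : ∃ b, j = b + 1 := ⟨j - 1, by omega⟩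
  simp only [Fintype.sum_prod_type, Fintype.univ_bool, mem_singleton, Bool.true_eq_false,
    not_false_eq_true, sum_insert, sum_singleton, gapAfter, ↓reduceIte, Bool.false_eq_true,
    add_tsub_cancel_right]
  have hP := one_sub_mul_geomSumD (a + 1)
  have hQ := one_sub_mul_geomSumD (b + 1)
  have ha : geomSumD a = geomSumD (a + 1) - rescale 2 DGF ^ a := by rw [geomSumD_succ]; ring
  have hb : geomSumD b = geomSumD (b + 1) - rescale 2 DGF ^ b := by rw [geomSumD_succ]; ring
  simp only [viciousGF, rescale_catGF_eq_one_add, geomSumD_succ (a + 1), geomSumD_succ (b + 1),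
    ha, hb]
  set D := rescale (2 : ℚ) DGF
  set P := geomSumD (a + 1)
  set Q := geomSumD (b + 1)
  -- `X (1 + D)² = D / 2` and `(1 + D)² - 4 D = (1 - D)²` reduce the goal to
  -- `(1 - D)² P Q = (1 - D ^ (a + 1)) (1 - D ^ (b + 1))`.
  linear_combination ((1 - D) * Q + D * D ^ b) * hP + hQ +
    (4 * P * Q + (D - 1) * (D ^ a * Q + P * D ^ b) - D * D ^ a * D ^ b) * rescale_two_DGF_eq

theorem ncard_vSet_eq_coeff_viciousGF (n i j : ℕ) :
    ((VSet i j n).ncard : ℚ) = coeff n (viciousGF i j) := by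
  rcases Nat.eq_zero_or_pos i with rfl | hi
  · simp [vSet_zero_left, viciousGF_zero_left]
  rcases Nat.eq_zero_or_pos j with rfl | hj
  · simp [vSet_zero_right, viciousGF_zero_right]
  cases n with
  | zero => simp [ncard_vSet_zero hi hj, constantCoeff_viciousGF hi hj]
  | succ n =>
    rw [ncard_vSet_succ hi hj, viciousGF_eq hi hj, map_add, coeff_succ_X_mul, coeff_one,
      if_neg n.succ_ne_zero, zero_add, map_sum, Nat.cast_sum]
    exact Finset.sum_congr rfl fun _ _ => ncard_vSet_eq_coeff_viciousGF n _ _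

theorem stmt16_general (i j : ℕ) :
    PowerSeries.mk (fun n => (Nat.card (VSet i j n) : ℚ)) =
      (PowerSeries.rescale (2 : ℚ) catGF) ^ 2 *
        (∑ k ∈ Finset.range i, (PowerSeries.rescale (2 : ℚ) DGF) ^ k) *
        (∑ k ∈ Finset.range j, (PowerSeries.rescale (2 : ℚ) DGF) ^ k) := by
  ext n
  rw [coeff_mk, Nat.card_coe_set_eq, ncard_vSet_eq_coeff_viciousGF]
  rfl

theorem stmt16 (i j : ℕ) (hi : 1 ≤ i) (hj : 1 ≤ j) :
    PowerSeries.mk (fun n => (Nat.card (VSet i j n) : ℚ)) =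
      (PowerSeries.rescale (2 : ℚ) catGF) ^ 2 *
        (∑ k ∈ Finset.range i, (PowerSeries.rescale (2 : ℚ) DGF) ^ k) *
        (∑ k ∈ Finset.range j, (PowerSeries.rescale (2 : ℚ) DGF) ^ k) :=
  stmt16_general i j
end
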